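/- For all positive integers x₁ and n, setting x₀ = n(2x₁² + 1) + x₁, the continued fraction [x₀; x₁, 2x₁, x₀, 2x₁, x₁, 2x₀ repeated] equals √(x₀² + 4n·x₁ + 2). -/

import Mathlib

/-!
The complete quotients of `√D`, `D = x₀² + 4n x₁ + 2`, are `ξ₀ = √D` and
`ξ_{j+1} = (√D + P_j) / Q_j` with the `6`-periodic pairs `(P_j, Q_j)` equal to
`(x₀, 4n x₁ + 2), (x₀ - 2n, 2n x₁ + 1), (x₀, 2), (x₀, 2n x₁ + 1), (x₀ - 2n, 4n x₁ + 2), (x₀, 1)`.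
Each step `ξ_{j+1} = a_{j+1} + 1 / ξ_{j+2}` reduces to the identities
`P_j + P_{j+1} = a_{j+1} Q_j` and `Q_j Q_{j+1} = D - P_{j+1}²`. As every complete quotient is at
least `1`, two levels of the continued fraction contract by a factor `4`, so the `m`-th
convergent is within `2 ⋅ 2⁻ᵐ` of `√D`.
-/

/-- The value of a finite continued fraction [x₀; x₁, ..., xₙ]. -/
noncomputable def cfFinite : List ℝ → ℝ
  | [] => 0
  | [x] => x
  | x :: y :: xs => x + (cfFinite (y :: xs))⁻¹

/-- The eventually periodic sequence with initial term `a₀` and repeating block `L`. -/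
def periodicSeq (a₀ : ℕ) (L : List ℕ) : ℕ → ℕ
  | 0 => a₀
  | n + 1 => L.getD (n % L.length) 0

/-- `x` is the value of the infinite continued fraction with partial quotients `a`,
i.e. the limit of the finite convergents. -/
def cfValue (a : ℕ → ℕ) (x : ℝ) : Prop :=
  Filter.Tendsto
    (fun n => cfFinite (((List.range (n + 1)).map a).map (fun k : ℕ => (k : ℝ))))
    Filter.atTop (nhds x)

/-- `x` is the value of the infinite periodic continued fraction
`[a₀; L repeated]`. -/
def IsPeriodicCF (a₀ : ℕ) (L : List ℕ) (x : ℝ) : Prop :=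
  cfValue (periodicSeq a₀ L) x

/-- `P` is the minimal period length of the continued fraction expansion of `√D`. -/
def IsMinPeriodCF (D P : ℕ) : Prop :=
  0 < P ∧
  (∃ L : List ℕ, L.length = P ∧ IsPeriodicCF (Nat.sqrt D) L (Real.sqrt D)) ∧
  ∀ Q : ℕ, 0 < Q → Q < P →
    ¬ ∃ L : List ℕ, L.length = Q ∧ IsPeriodicCF (Nat.sqrt D) L (Real.sqrt D)

theorem cfFinite_cons (x : ℝ) {l : List ℝ} (hl : l ≠ []) :
    cfFinite (x :: l) = x + (cfFinite l)⁻¹ := by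
  cases l with
  | nil => exact absurd rfl hl
  | cons _ _ => rfl

theorem cfFinite_append_add_inv (l : List ℝ) (a t : ℝ) :
    cfFinite (l ++ [a + t⁻¹]) = cfFinite (l ++ [a, t]) := by
  induction l with
  | nil => rfl
  | cons x l ih =>
    rw [List.cons_append, List.cons_append, cfFinite_cons x (by simp), cfFinite_cons x (by simp),
      ih]

theorem one_le_cfFinite_append {l : List ℝ} {t : ℝ} (hl : ∀ y ∈ l, 1 ≤ y) (ht : 1 ≤ t) :
    1 ≤ cfFinite (l ++ [t]) := by
  induction l with
  | nil => exact ht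
  | cons x l ih =>
    rw [List.cons_append, cfFinite_cons x (by simp)]
    have hx : 1 ≤ x := hl x List.mem_cons_self
    have : 0 ≤ (cfFinite (l ++ [t]))⁻¹ :=
      inv_nonneg.2 (zero_le_one.trans (ih fun y hy => hl y (List.mem_cons_of_mem _ hy)))
    linarith

theorem abs_inv_sub_inv_le {t t' : ℝ} (ht : 1 ≤ t) (ht' : 1 ≤ t') :
    |t⁻¹ - t'⁻¹| ≤ |t - t'| := by
  rw [inv_sub_inv (by positivity) (by positivity), abs_div, abs_sub_comm,
    abs_of_pos (by positivity : 0 < t * t')]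
  exact div_le_self (abs_nonneg _) (one_le_mul_of_one_le_of_one_le ht ht')

theorem abs_inv_add_inv_sub_inv_add_inv_le {c v v' : ℝ} (hc : 1 ≤ c) (hv : 1 ≤ v)
    (hv' : 1 ≤ v') : |(c + v⁻¹)⁻¹ - (c + v'⁻¹)⁻¹| ≤ |v - v'| / 4 := by
  have hcv : 1 ≤ c * v := one_le_mul_of_one_le_of_one_le hc hv
  have hcv' : 1 ≤ c * v' := one_le_mul_of_one_le_of_one_le hc hv'
  have hdiff : (c + v⁻¹)⁻¹ - (c + v'⁻¹)⁻¹ = (v - v') / ((c * v + 1) * (c * v' + 1)) := by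
    field_simp
    ring
  have h4 : 4 ≤ (c * v + 1) * (c * v' + 1) := by nlinarith
  rw [hdiff, abs_div, abs_of_pos (by linarith : (0 : ℝ) < (c * v + 1) * (c * v' + 1))]
  exact div_le_div_of_nonneg_left (abs_nonneg _) (by norm_num) h4

theorem abs_cfFinite_append_sub_le :
    ∀ (l : List ℝ) {t t' : ℝ}, (∀ y ∈ l, 1 ≤ y) → 1 ≤ t → 1 ≤ t' →
      |cfFinite (l ++ [t]) - cfFinite (l ++ [t'])| ≤ 2 * (1 / 2) ^ l.length * |t - t'|
  | [], t, t', _, _, _ => by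
    change |t - t'| ≤ 2 * (1 / 2) ^ 0 * |t - t'|
    linarith [abs_nonneg (t - t')]
  | [b], t, t', _, ht, ht' => by
    change |b + t⁻¹ - (b + t'⁻¹)| ≤ 2 * (1 / 2) ^ 1 * |t - t'|
    rw [add_sub_add_left_eq_sub]
    linarith [abs_inv_sub_inv_le ht ht']
  | b :: c :: r, t, t', hl, ht, ht' => by
    have hr : ∀ y ∈ r, 1 ≤ y := fun y hy => hl y (by simp [hy])
    simp only [List.cons_append]
    rw [cfFinite_cons b (by simp), cfFinite_cons b (by simp), cfFinite_cons c (by simp),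
      cfFinite_cons c (by simp), add_sub_add_left_eq_sub]
    calc _ ≤ |cfFinite (r ++ [t]) - cfFinite (r ++ [t'])| / 4 :=
          abs_inv_add_inv_sub_inv_add_inv_le (hl c (by simp)) (one_le_cfFinite_append hr ht)
            (one_le_cfFinite_append hr ht')
      _ ≤ 2 * (1 / 2) ^ r.length * |t - t'| / 4 := by
          gcongr
          exact abs_cfFinite_append_sub_le r hr ht ht'
      _ = _ := by simp only [List.length_cons]; ring

theorem eq_cfFinite_range_append {a ξ : ℕ → ℝ} (h : ∀ k, ξ k = a k + (ξ (k + 1))⁻¹) (m : ℕ) :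
    ξ 0 = cfFinite ((List.range m).map a ++ [ξ m]) := by
  induction m with
  | zero => rfl
  | succ m ih =>
    rw [ih, h m, cfFinite_append_add_inv, List.range_succ, List.map_append, List.append_assoc]
    rfl

theorem cfValue_of_eq_add_inv {a : ℕ → ℕ} {ξ : ℕ → ℝ} (ha : ∀ k, 1 ≤ a k)
    (hξ : ∀ k, 1 ≤ ξ (k + 1)) (h : ∀ k, ξ k = a k + (ξ (k + 1))⁻¹) : cfValue a (ξ 0) := by
  have ha' : ∀ k, (1 : ℝ) ≤ a k := fun k => by exact_mod_cast ha k
  have hξ' : ∀ k, 1 ≤ ξ k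
    | 0 => by rw [h 0]; linarith [ha' 0, inv_nonneg.2 (zero_le_one.trans (hξ 0))]
    | k + 1 => hξ k
  have bound : ∀ m, ‖cfFinite ((List.range (m + 1)).map (fun k => (a k : ℝ))) - ξ 0‖ ≤
      2 * (1 / 2) ^ m := by
    intro m
    rw [Real.norm_eq_abs, eq_cfFinite_range_append h m, List.range_succ, List.map_append,
      List.map_singleton]
    calc _ ≤ 2 * (1 / 2) ^ m * |a m - ξ m| := by
          simpa using abs_cfFinite_append_sub_le ((List.range m).map (fun k => (a k : ℝ)))
            (by simpa using fun k _ => ha' k) (ha' m) (hξ' m)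
      _ ≤ 2 * (1 / 2) ^ m * 1 := by
          gcongr
          rw [h m, sub_add_cancel_left, abs_neg,
            abs_of_nonneg (inv_nonneg.2 (zero_le_one.trans (hξ m)))]
          exact inv_le_one_of_one_le₀ (hξ m)
      _ = _ := mul_one _
  have hgeom : Filter.Tendsto (fun m : ℕ => 2 * (1 / 2 : ℝ) ^ m) Filter.atTop (nhds 0) := by
    simpa using (tendsto_pow_atTop_nhds_zero_of_lt_one (r := (1 / 2 : ℝ)) (by norm_num)
      (by norm_num)).const_mul 2
  unfold cfValue
  simp only [List.map_map, Function.comp_def]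
  exact tendsto_iff_norm_sub_tendsto_zero.2
    (squeeze_zero' (.of_forall fun _ => norm_nonneg _) (.of_forall bound) hgeom)

theorem isPeriodicCF_of_cycle {a₀ : ℕ} {L : List ℕ} {x : ℝ} (η : ℕ → ℝ) (hL : L ≠ [])
    (ha₀ : 1 ≤ a₀) (hL₁ : ∀ y ∈ L, 1 ≤ y) (hη : ∀ j < L.length, 1 ≤ η j)
    (hx : x = a₀ + (η 0)⁻¹)
    (hstep : ∀ j < L.length, η j = L.getD j 0 + (η ((j + 1) % L.length))⁻¹) :
    IsPeriodicCF a₀ L x := by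
  have hmod : ∀ k, k % L.length < L.length := fun k => Nat.mod_lt k (List.length_pos_iff.2 hL)
  let ξ : ℕ → ℝ
    | 0 => x
    | k + 1 => η (k % L.length)
  have ha : ∀ k, 1 ≤ periodicSeq a₀ L k
    | 0 => ha₀
    | k + 1 => by
      change 1 ≤ L.getD (k % L.length) 0
      rw [List.getD_eq_getElem _ _ (hmod k)]
      exact hL₁ _ (List.getElem_mem _)
  have hrec : ∀ k, ξ k = periodicSeq a₀ L k + (ξ (k + 1))⁻¹
    | 0 => by simpa [ξ, periodicSeq] using hx
    | k + 1 => by simpa [ξ, periodicSeq, Nat.mod_add_mod] using hstep _ (hmod k)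
  exact cfValue_of_eq_add_inv ha (fun k => hη (k % L.length) (hmod k)) hrec

theorem add_div_eq_add_inv_add_div {s P P' Q Q' A : ℝ} (hQ : Q ≠ 0) (hP' : s + P' ≠ 0)
    (hsum : P + P' = A * Q) (hprod : Q * Q' = s ^ 2 - P' ^ 2) :
    (s + P) / Q = A + ((s + P') / Q')⁻¹ := by
  rw [inv_div]
  field_simp
  linear_combination (s + P') * hsum - hprod

/-- `ξ_{j+1} = (s + P_j) / Q_j`, where `s = √D` is the root of `s² = x₀² + 4n x₁ + 2`. -/
noncomputable def culminatingSixQuotient (x₁ n : ℕ) (s : ℝ) (j : ℕ) : ℝ :=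
  let x₀ : ℝ := n * (2 * x₁ ^ 2 + 1) + x₁
  (s + [x₀, x₀ - 2 * n, x₀, x₀, x₀ - 2 * n, x₀].getD j 0) /
    [(4 * n * x₁ + 2 : ℝ), 2 * n * x₁ + 1, 2, 2 * n * x₁ + 1, 4 * n * x₁ + 2, 1].getD j 1

section CulminatingSix

variable (x₁ n : ℕ) {s : ℝ}

theorem eq_add_inv_culminatingSixQuotient_zero
    (hs : s ^ 2 = ((n : ℝ) * (2 * x₁ ^ 2 + 1) + x₁) ^ 2 + 4 * n * x₁ + 2)
    (hsX : (n : ℝ) * (2 * x₁ ^ 2 + 1) + x₁ < s) :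
    s = ((n * (2 * x₁ ^ 2 + 1) + x₁ : ℕ) : ℝ) + (culminatingSixQuotient x₁ n s 0)⁻¹ := by
  have hX : (0 : ℝ) ≤ n * (2 * x₁ ^ 2 + 1) + x₁ := by positivity
  push_cast
  simpa [culminatingSixQuotient] using add_div_eq_add_inv_add_div (s := s) (P := 0) (Q := 1)
    (A := (n : ℝ) * (2 * x₁ ^ 2 + 1) + x₁) (P' := (n : ℝ) * (2 * x₁ ^ 2 + 1) + x₁)
    (Q' := 4 * n * x₁ + 2) one_ne_zero (by linarith) (by ring) (by linear_combination -hs)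

theorem one_le_culminatingSixQuotient (hx₁ : 1 ≤ x₁)
    (hsX : (n : ℝ) * (2 * x₁ ^ 2 + 1) + x₁ ≤ s) {j : ℕ} (hj : j < 6) :
    1 ≤ culminatingSixQuotient x₁ n s j := by
  have hx₁' : (1 : ℝ) ≤ x₁ := by exact_mod_cast hx₁
  have hnx : (n : ℝ) * x₁ ≤ n * x₁ ^ 2 := by
    gcongr
    nlinarith
  have hnx₀ : (0 : ℝ) ≤ n * x₁ := by positivity
  interval_cases j <;>
    simp only [culminatingSixQuotient, List.getD_cons_zero, List.getD_cons_succ] <;>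
    rw [one_le_div (by positivity)] <;> linarith

theorem culminatingSixQuotient_step
    (hs : s ^ 2 = ((n : ℝ) * (2 * x₁ ^ 2 + 1) + x₁) ^ 2 + 4 * n * x₁ + 2)
    (hsX : (n : ℝ) * (2 * x₁ ^ 2 + 1) + x₁ < s) {j : ℕ} (hj : j < 6) :
    culminatingSixQuotient x₁ n s j =
      (([x₁, 2 * x₁, n * (2 * x₁ ^ 2 + 1) + x₁, 2 * x₁, x₁, 2 * (n * (2 * x₁ ^ 2 + 1) + x₁)].getD
        j 0 : ℕ) : ℝ) + (culminatingSixQuotient x₁ n s ((j + 1) % 6))⁻¹ := by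
  have hnX : (0 : ℝ) ≤ n * (2 * x₁ ^ 2) + x₁ := by positivity
  interval_cases j <;>
    simp only [culminatingSixQuotient, List.getD_cons_zero, List.getD_cons_succ, Nat.reduceAdd,
      Nat.reduceMod] <;> push_cast <;>
    refine add_div_eq_add_inv_add_div (by positivity) ?_ (by ring) (by linear_combination -hs) <;>
    exact ne_of_gt (by linarith)

end CulminatingSix

theorem cf_value_culminating_six_general (x₁ n : ℕ) (hx₁ : 0 < x₁) :
    IsPeriodicCF (n * (2 * x₁ ^ 2 + 1) + x₁)
      [x₁, 2 * x₁, n * (2 * x₁ ^ 2 + 1) + x₁, 2 * x₁, x₁,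
        2 * (n * (2 * x₁ ^ 2 + 1) + x₁)]
      (Real.sqrt (((n * (2 * x₁ ^ 2 + 1) + x₁) ^ 2 + 4 * n * x₁ + 2 : ℕ))) := by
  set s := Real.sqrt (((n * (2 * x₁ ^ 2 + 1) + x₁) ^ 2 + 4 * n * x₁ + 2 : ℕ))
  have hs : s ^ 2 = ((n : ℝ) * (2 * x₁ ^ 2 + 1) + x₁) ^ 2 + 4 * n * x₁ + 2 := by
    rw [Real.sq_sqrt (Nat.cast_nonneg _)]
    push_cast
    ring
  have hsX : (n : ℝ) * (2 * x₁ ^ 2 + 1) + x₁ < s := by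
    refine lt_of_pow_lt_pow_left₀ 2 (Real.sqrt_nonneg _) ?_
    rw [hs]
    linarith [(by positivity : (0 : ℝ) ≤ 4 * n * x₁)]
  exact isPeriodicCF_of_cycle (culminatingSixQuotient x₁ n s) (List.cons_ne_nil _ _)
    (hx₁.trans_le (Nat.le_add_left _ _))
    (by simp only [List.mem_cons, List.not_mem_nil, or_false, forall_eq_or_imp, forall_eq]; omega)
    (fun _ => one_le_culminatingSixQuotient x₁ n hx₁ hsX.le)
    (eq_add_inv_culminatingSixQuotient_zero x₁ n hs hsX)
    (fun _ => culminatingSixQuotient_step x₁ n hs hsX)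

theorem cf_value_culminating_six (x₁ n : ℕ) (hx₁ : 0 < x₁) (hn : 0 < n) :
    IsPeriodicCF (n * (2 * x₁ ^ 2 + 1) + x₁)
      [x₁, 2 * x₁, n * (2 * x₁ ^ 2 + 1) + x₁, 2 * x₁, x₁,
        2 * (n * (2 * x₁ ^ 2 + 1) + x₁)]
      (Real.sqrt (((n * (2 * x₁ ^ 2 + 1) + x₁) ^ 2 + 4 * n * x₁ + 2 : ℕ))) :=
  cf_value_culminating_six_general x₁ n hx₁
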